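/- Under the assumptions of the main theorem, the count probability of N fully positive outcomes satisfies p_N(N) = Σ over nonnegative integers k_1,...,k_{l_max} with Σ_l l·k_l = N of Π_{l=1}^{l_max} (C_l/N^l)^{k_l} (1/l!)^{k_l} M^{n_l}_{l,k_l}, where n_l = N − Σ_{l'<l} l'·k_{l'} and M^n_{l,k} = n!/((n−lk)! k!). -/

import Mathlib

open MeasureTheory Finset
open scoped Classical

/-- The joint probability `P(𝟙_{E_1}=r_1, …, 𝟙_{E_N}=r_N)`. -/
noncomputable def jointProb {Ω : Type*} [MeasurableSpace Ω] (μ : Measure Ω) {N : ℕ}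
    (E : Fin N → Set Ω) (r : Fin N → Bool) : ℝ :=
  (μ {ω | ∀ i, ω ∈ E i ↔ r i = true}).toReal

/-- A finite sequence of events is symmetric if the joint distribution of the
indicator functions is invariant under permutations of the events. -/
def IsSymmetricEvents {Ω : Type*} [MeasurableSpace Ω] (μ : Measure Ω) {N : ℕ}
    (E : Fin N → Set Ω) : Prop :=
  ∀ (σ : Equiv.Perm (Fin N)) (r : Fin N → Bool),
    jointProb μ E r = jointProb μ E (r ∘ σ)

/-- The probability function of order `k`:
`P_k(r_1,…,r_k) = P(𝟙_{E_1}=r_1, …, 𝟙_{E_k}=r_k)`. -/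
noncomputable def probFun {Ω : Type*} [MeasurableSpace Ω] (μ : Measure Ω) {N : ℕ}
    (E : Fin N → Set Ω) (k : ℕ) (hk : k ≤ N) (r : Fin k → Bool) : ℝ :=
  (μ {ω | ∀ i : Fin k, (ω ∈ E (Fin.castLE hk i) ↔ r i = true)}).toReal

/-- The sum, over all set partitions of `{1,…,k}` into at least two blocks, of the
product over the blocks `B` of `G_{|B|}` evaluated at the arguments `(r_i)_{i∈B}`,
taken in increasing index order. -/
noncomputable def partSum (G : (k : ℕ) → (Fin k → Bool) → ℝ) (k : ℕ)
    (r : Fin k → Bool) : ℝ :=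
  ∑ π : Finset (Finset (Fin k)),
    if ((∀ B ∈ π, B.Nonempty) ∧ (∀ i : Fin k, ∃! B, B ∈ π ∧ i ∈ B)) ∧ 2 ≤ π.card then
      ∏ B ∈ π, G B.card (fun j => r (B.orderIsoOfFin rfl j).1)
    else 0

/-- `M^n_{l,k} = n! / ((n - l·k)! · k!)`, the number of ways to choose `k`
unordered disjoint ordered `l`-tuples from `n` elements, as a real number. -/
noncomputable def Mfac (n l k : ℕ) : ℝ :=
  (n.factorial : ℝ) / (((n - l * k).factorial : ℝ) * ((k.factorial : ℝ)))

/-- `n_l = N - Σ_{l' < l} l'·k_{l'}`. -/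
def nl {lmax : ℕ} (N : ℕ) (k : Fin lmax → ℕ) (l : Fin lmax) : ℕ :=
  N - ∑ l' ∈ Finset.univ.filter (fun l' : Fin lmax => l' < l), (l'.1 + 1) * k l'

/-!
Write `f l = C_l / N^l`. Unfolding the defining recursion of the correlation functions once,
`P_N(1,…,1)` is the sum over all set partitions of `Fin N` of `∏_B f |B|`. Splitting off the
block of a fixed point, this partition sum `p n` of an `n`-set satisfies
`p (n + 1) = ∑ i, (n choose i) f (i + 1) p (n - i)`. The profile sum
`n! ∑_{Σ l k_l = n} ∏_l (f l / l!)^{k_l} / k_l!` satisfies the same recursion: it is `n!` times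
the `n`-th coefficient of `exp (∑_l f l x^l / l!)`, and differentiating gives the recursion
(on profiles: `n = ∑ l k_l`, and removing one block of size `l` turns `l k_l` times a term into
`f l / (l - 1)!` times a term of size `n - l`). Finally `∏_l M^{n_l}_{l,k_l}` telescopes to
`N! / ∏_l k_l!`.
-/

open Nat

section Profiles

variable {m : ℕ}

def profileSize (k : Fin m → ℕ) : ℕ := ∑ l, (l.1 + 1) * k l

lemma profileSize_add (k k' : Fin m → ℕ) :
    profileSize (k + k') = profileSize k + profileSize k' := by
  simp only [profileSize, Pi.add_apply, mul_add, sum_add_distrib]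

lemma profileSize_single (j : Fin m) : profileSize (Pi.single j 1) = j.1 + 1 := by
  simp [profileSize, Pi.single_apply]

lemma mul_apply_le_profileSize (k : Fin m → ℕ) (j : Fin m) : (j.1 + 1) * k j ≤ profileSize k :=
  single_le_sum (f := fun l : Fin m => (l.1 + 1) * k l) (fun _ _ => Nat.zero_le _) (mem_univ j)

lemma profileSize_castSucc (k : Fin (m + 1) → ℕ) :
    profileSize k = profileSize (fun i => k i.castSucc) + (m + 1) * k (Fin.last m) := by
  simp [profileSize, Fin.sum_univ_castSucc]

def profiles (m n : ℕ) : Finset (Fin m → ℕ) :=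
  (Fintype.piFinset fun _ => range (n + 1)).filter (profileSize · = n)

@[simp] lemma mem_profiles {n : ℕ} {k : Fin m → ℕ} : k ∈ profiles m n ↔ profileSize k = n := by
  refine ⟨fun h => (mem_filter.1 h).2, fun h => mem_filter.2 ⟨?_, h⟩⟩
  refine Fintype.mem_piFinset.2 fun l => mem_range.2 ?_
  have := mul_apply_le_profileSize k l
  nlinarith

lemma profiles_zero : profiles m 0 = {0} := by
  ext k
  simp [profileSize, funext_iff]

lemma sum_profiles_add_single (h : (Fin m → ℕ) → ℝ) {j : Fin m} (hj : ∀ k, k j = 0 → h k = 0)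
    (n : ℕ) :
    ∑ k ∈ profiles m n, h (k + Pi.single j 1) = ∑ k ∈ profiles m (n + (j + 1)), h k := by
  calc ∑ k ∈ profiles m n, h (k + Pi.single j 1)
      = ∑ k ∈ (profiles m n).map (addRightEmbedding (Pi.single j 1)), h k :=
        (sum_map _ (addRightEmbedding _) h).symm
    _ = _ := by
      refine sum_subset (fun k hk => ?_) fun k hk hk' => hj k (by_contra fun hkj => hk' ?_)
      · obtain ⟨k, hk, rfl⟩ := mem_map.1 hk
        simp_all [profileSize_add, profileSize_single]
      · have hk_eq : k - Pi.single j 1 + Pi.single j 1 = k := by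
          ext l
          by_cases hl : l = j
          · subst hl
            simp only [Pi.add_apply, Pi.sub_apply, Pi.single_eq_same]
            omega
          · simp [Pi.single_eq_of_ne hl]
        refine mem_map.2 ⟨k - Pi.single j 1, ?_, hk_eq⟩
        have := profileSize_add (k - Pi.single j 1) (Pi.single j 1)
        simp_all [profileSize_single]

noncomputable def profileTerm (a : Fin m → ℝ) (k : Fin m → ℕ) : ℝ := ∏ l, a l ^ k l / (k l)!

lemma profileTerm_add_single (a : Fin m → ℝ) (k : Fin m → ℕ) (j : Fin m) :
    profileTerm a (k + Pi.single j 1) * (k j + 1) = a j * profileTerm a k := by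
  simp only [profileTerm, ← mul_prod_erase _ _ (mem_univ j), Pi.add_apply, Pi.single_eq_same]
  rw [prod_congr rfl fun l hl => by rw [Pi.single_eq_of_ne (ne_of_mem_erase hl), add_zero]]
  push_cast [factorial_succ, pow_succ]
  field_simp

noncomputable def profileSum (a : Fin m → ℝ) (n : ℕ) : ℝ :=
  ∑ k ∈ profiles m n, profileTerm a k

lemma profileSum_zero (a : Fin m → ℝ) : profileSum a 0 = 1 := by
  simp [profileSum, profiles_zero, profileTerm]

lemma sum_profiles_apply_mul_profileTerm (a : Fin m → ℝ) (n : ℕ) (j : Fin m) :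
    ∑ k ∈ profiles m (n + 1), (k j : ℝ) * profileTerm a k =
      if j.1 ≤ n then a j * profileSum a (n - j) else 0 := by
  split_ifs with hj
  · rw [show n + 1 = n - j + (j + 1) by omega,
      ← sum_profiles_add_single _ (fun k hk => by simp [hk]), profileSum, mul_sum]
    refine sum_congr rfl fun k _ => ?_
    rw [← profileTerm_add_single]
    simp [mul_comm]
  · refine sum_eq_zero fun k hk => ?_
    have hle := mul_apply_le_profileSize k j
    rw [mem_profiles.1 hk] at hle
    have hkj : k j = 0 := by nlinarith
    simp [hkj]

lemma succ_mul_profileSum_succ (a : Fin m → ℝ) (n : ℕ) :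
    ((n + 1 : ℕ) : ℝ) * profileSum a (n + 1) =
      ∑ j : Fin m, if j.1 ≤ n then (j.1 + 1) * a j * profileSum a (n - j) else 0 := by
  calc ((n + 1 : ℕ) : ℝ) * profileSum a (n + 1)
      = ∑ k ∈ profiles m (n + 1), ∑ j : Fin m, (j.1 + 1) * ((k j : ℝ) * profileTerm a k) := by
        rw [profileSum, mul_sum]
        refine sum_congr rfl fun k hk => ?_
        rw [← mem_profiles.1 hk, profileSize]
        push_cast
        simp only [sum_mul, mul_assoc]
    _ = _ := by
        rw [sum_comm]
        refine sum_congr rfl fun j _ => ?_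
        rw [← mul_sum, sum_profiles_apply_mul_profileTerm]
        split_ifs <;> ring

lemma factorial_mul_profileSum_succ (a : Fin m → ℝ) (n : ℕ) :
    ((n + 1)! : ℝ) * profileSum a (n + 1) =
      ∑ j : Fin m, n.choose j * ((j.1 + 1)! * a j) * ((n - j)! * profileSum a (n - j)) := by
  rw [factorial_succ, Nat.cast_mul, mul_comm _ (n ! : ℝ), mul_assoc, succ_mul_profileSum_succ,
    mul_sum]
  refine sum_congr rfl fun j _ => ?_
  split_ifs with hj
  · rw [← choose_mul_factorial_mul_factorial hj, factorial_succ]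
    push_cast
    ring
  · simp [choose_eq_zero_of_lt (not_le.1 hj)]

lemma factorial_mul_profileSum_succ_eq_sum_range (f : ℕ → ℝ) (hf : ∀ l, m < l → f l = 0)
    {a : Fin m → ℝ} (hfa : ∀ j : Fin m, (j.1 + 1)! * a j = f (j + 1)) (n : ℕ) :
    ((n + 1)! : ℝ) * profileSum a (n + 1) =
      ∑ i ∈ range (n + 1), n.choose i * f (i + 1) * ((n - i)! * profileSum a (n - i)) := by
  set g : ℕ → ℝ := fun i => n.choose i * f (i + 1) * ((n - i)! * profileSum a (n - i))
  have hg_choose : ∀ i ≥ n + 1, g i = 0 := fun i hi => by simp [g, choose_eq_zero_of_lt hi]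
  have hg_f : ∀ i ≥ m, g i = 0 := fun i hi => by simp [g, hf (i + 1) (by omega)]
  calc ((n + 1)! : ℝ) * profileSum a (n + 1)
      = ∑ i ∈ range m, g i := by
        rw [factorial_mul_profileSum_succ, ← Fin.sum_univ_eq_sum_range]
        exact sum_congr rfl fun j _ => by rw [hfa]
    _ = ∑ i ∈ range (n + 1), g i := by
        rw [← eventually_constant_sum hg_f (le_add_right m (n + 1)),
          ← eventually_constant_sum hg_choose (le_add_left (n + 1) m)]

end Profiles

section SetPartition

variable {α : Type*}

def IsSetPartition (s : Finset α) (π : Finset (Finset α)) : Prop :=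
  (∀ B ∈ π, B.Nonempty ∧ B ⊆ s) ∧ ∀ i ∈ s, ∃! B, B ∈ π ∧ i ∈ B

lemma isSetPartition_empty_iff {π : Finset (Finset α)} : IsSetPartition ∅ π ↔ π = ∅ := by
  refine ⟨fun hπ => eq_empty_of_forall_notMem fun B hB => ?_,
    fun hπ => by simp [hπ, IsSetPartition]⟩
  obtain ⟨⟨y, hy⟩, hB⟩ := hπ.1 B hB
  exact notMem_empty y (hB hy)

section

variable [DecidableEq α] {s B : Finset α} {π : Finset (Finset α)}

lemma IsSetPartition.erase (hπ : IsSetPartition s π) (hB : B ∈ π) :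
    IsSetPartition (s \ B) (π.erase B) := by
  refine ⟨fun C hC => ⟨(hπ.1 C (mem_of_mem_erase hC)).1, fun y hy => ?_⟩, fun i hi => ?_⟩
  · have hCπ := mem_of_mem_erase hC
    have hys := (hπ.1 C hCπ).2 hy
    refine mem_sdiff.2 ⟨hys, fun hyB => ne_of_mem_erase hC ?_⟩
    exact (hπ.2 y hys).unique ⟨hCπ, hy⟩ ⟨hB, hyB⟩
  · obtain ⟨his, hiB⟩ := mem_sdiff.1 hi
    obtain ⟨C, ⟨hCπ, hiC⟩, huniq⟩ := hπ.2 i his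
    refine ⟨C, ⟨mem_erase.2 ⟨?_, hCπ⟩, hiC⟩,
      fun D hD => huniq D ⟨mem_of_mem_erase hD.1, hD.2⟩⟩
    rintro rfl
    exact hiB hiC

lemma IsSetPartition.notMem (hπ : IsSetPartition (s \ B) π) (hB : B.Nonempty) : B ∉ π :=
  fun hBπ => by
    obtain ⟨y, hy⟩ := hB
    exact (mem_sdiff.1 ((hπ.1 B hBπ).2 hy)).2 hy

lemma IsSetPartition.insert (hπ : IsSetPartition (s \ B) π) (hB : B.Nonempty) (hBs : B ⊆ s) :
    IsSetPartition s (insert B π) := by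
  refine ⟨fun C hC => ?_, fun i hi => ?_⟩
  · rcases mem_insert.1 hC with rfl | hC
    · exact ⟨hB, hBs⟩
    · exact ⟨(hπ.1 C hC).1, (hπ.1 C hC).2.trans sdiff_subset⟩
  · by_cases hiB : i ∈ B
    · refine ⟨B, ⟨mem_insert_self B π, hiB⟩, fun C ⟨hC, hiC⟩ => ?_⟩
      rcases mem_insert.1 hC with rfl | hC
      · rfl
      · exact absurd hiB (mem_sdiff.1 ((hπ.1 C hC).2 hiC)).2
    · obtain ⟨C, ⟨hCπ, hiC⟩, huniq⟩ := hπ.2 i (mem_sdiff.2 ⟨hi, hiB⟩)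
      refine ⟨C, ⟨mem_insert_of_mem hCπ, hiC⟩, fun D ⟨hD, hiD⟩ => ?_⟩
      rcases mem_insert.1 hD with rfl | hD
      · exact absurd hiD hiB
      · exact huniq D ⟨hD, hiD⟩

end

variable [Fintype α]

noncomputable def partitionSum (f : ℕ → ℝ) (s : Finset α) : ℝ :=
  ∑ π with IsSetPartition s π, ∏ B ∈ π, f #B

lemma partitionSum_empty (f : ℕ → ℝ) : partitionSum f (∅ : Finset α) = 1 := by
  simp [partitionSum, isSetPartition_empty_iff, filter_eq']

lemma isSetPartition_univ_iff {π : Finset (Finset α)} :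
    IsSetPartition univ π ↔ (∀ B ∈ π, B.Nonempty) ∧ ∀ i, ∃! B, B ∈ π ∧ i ∈ B := by
  simp [IsSetPartition]

lemma isSetPartition_univ_and_card_lt_two_iff [Nonempty α] {π : Finset (Finset α)} :
    IsSetPartition univ π ∧ #π < 2 ↔ π = {univ} := by
  constructor
  · rintro ⟨hπ, hcard⟩
    obtain ⟨B, ⟨hB, -⟩, -⟩ := hπ.2 (Classical.arbitrary α) (mem_univ _)
    have hpos : 0 < #π := card_pos.2 ⟨B, hB⟩
    obtain ⟨B', rfl⟩ := card_eq_one.1 (show #π = 1 by omega)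
    refine congrArg _ (eq_univ_of_forall fun i => ?_)
    obtain ⟨C, ⟨hC, hiC⟩, -⟩ := hπ.2 i (mem_univ i)
    rwa [mem_singleton.1 hC] at hiC
  · rintro rfl
    exact ⟨⟨by simp [univ_nonempty], fun i _ => ⟨univ, by simp, by simp⟩⟩, by simp⟩

lemma partitionSum_univ [Nonempty α] (f : ℕ → ℝ) :
    partitionSum f (univ : Finset α) = f (Fintype.card α) +
      ∑ π with IsSetPartition (univ : Finset α) π ∧ 2 ≤ #π, ∏ B ∈ π, f #B := by
  rw [partitionSum, ← sum_filter_not_add_sum_filter _ (2 ≤ #·), filter_filter, filter_filter]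
  simp only [not_le, isSetPartition_univ_and_card_lt_two_iff, filter_eq', mem_univ, if_true,
    sum_singleton, prod_singleton]
  rw [Finset.card_univ]

variable [DecidableEq α]

lemma sum_isSetPartition_mem (f : ℕ → ℝ) {s B : Finset α} (hB : B.Nonempty) (hBs : B ⊆ s) :
    ∑ π with IsSetPartition s π ∧ B ∈ π, ∏ C ∈ π.erase B, f #C =
      partitionSum f (s \ B) := by
  refine sum_nbij' (·.erase B) (insert B ·) (fun π hπ => ?_) (fun π hπ => ?_)
    (fun π hπ => ?_) (fun π hπ => ?_) fun _ _ => rfl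
  · obtain ⟨hπ, hBπ⟩ := (mem_filter.1 hπ).2
    exact mem_filter.2 ⟨mem_univ _, hπ.erase hBπ⟩
  · exact mem_filter.2 ⟨mem_univ _, (mem_filter.1 hπ).2.insert hB hBs, mem_insert_self B π⟩
  · exact insert_erase (mem_filter.1 hπ).2.2
  · exact erase_insert ((mem_filter.1 hπ).2.notMem hB)

lemma partitionSum_eq_sum_block (f : ℕ → ℝ) {s : Finset α} {x : α} (hx : x ∈ s) :
    partitionSum f s = ∑ B ∈ s.powerset with x ∈ B, f #B * partitionSum f (s \ B) := by
  have hblock : ∀ π, IsSetPartition s π →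
      ∏ C ∈ π, f #C = ∑ B ∈ π with x ∈ B, f #B * ∏ C ∈ π.erase B, f #C := by
    intro π hπ
    obtain ⟨B₀, ⟨hB₀, hxB₀⟩, huniq⟩ := hπ.2 x hx
    rw [sum_filter, sum_eq_single_of_mem B₀ hB₀ fun B hB hne =>
      if_neg fun hxB => hne (huniq B ⟨hB, hxB⟩), if_pos hxB₀,
      mul_prod_erase π (fun C => f #C) hB₀]
  calc partitionSum f s
      = ∑ π with IsSetPartition s π, ∑ B ∈ π with x ∈ B, f #B * ∏ C ∈ π.erase B, f #C :=
        sum_congr rfl fun π hπ => hblock π (mem_filter.1 hπ).2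
    _ = ∑ B ∈ s.powerset with x ∈ B,
          ∑ π with IsSetPartition s π ∧ B ∈ π, f #B * ∏ C ∈ π.erase B, f #C := by
        refine sum_comm' fun π B => ?_
        simp only [mem_filter, mem_univ, true_and, mem_powerset]
        exact ⟨fun ⟨hπ, hBπ, hxB⟩ => ⟨⟨hπ, hBπ⟩, (hπ.1 B hBπ).2, hxB⟩,
          fun ⟨⟨hπ, hBπ⟩, _, hxB⟩ => ⟨hπ, hBπ, hxB⟩⟩
    _ = _ := by
        refine sum_congr rfl fun B hB => ?_
        obtain ⟨hBs, hxB⟩ := mem_filter.1 hB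
        rw [← mul_sum, sum_isSetPartition_mem f ⟨x, hxB⟩ (mem_powerset.1 hBs)]

lemma partitionSum_insert (f : ℕ → ℝ) {t : Finset α} {x : α} (hx : x ∉ t) :
    partitionSum f (insert x t) = ∑ A ∈ t.powerset, f (#A + 1) * partitionSum f (t \ A) := by
  rw [partitionSum_eq_sum_block f (mem_insert_self x t), sum_filter, sum_powerset_insert hx]
  have hxA : ∀ A ∈ t.powerset, x ∉ A := fun A hA hxA => hx (mem_powerset.1 hA hxA)
  rw [sum_eq_zero fun A hA => if_neg (hxA A hA), zero_add]
  refine sum_congr rfl fun A hA => ?_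
  rw [if_pos (mem_insert_self x A), card_insert_of_notMem (hxA A hA), insert_sdiff_insert,
    sdiff_insert_of_notMem hx]

theorem partitionSum_eq_factorial_mul_profileSum {m : ℕ} (f : ℕ → ℝ)
    (hf : ∀ l, m < l → f l = 0) (s : Finset α) :
    partitionSum f s = (#s)! * profileSum (fun j : Fin m => f (j.1 + 1) / (j.1 + 1)!) #s := by
  induction s using Finset.strongInduction with
  | H s ih =>
    rcases s.eq_empty_or_nonempty with rfl | ⟨x, hx⟩
    · simp [partitionSum_empty, profileSum_zero]
    obtain ⟨t, hxt, rfl⟩ : ∃ t, x ∉ t ∧ s = insert x t :=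
      ⟨s.erase x, notMem_erase x s, (insert_erase hx).symm⟩
    have hsub : ∀ A ∈ t.powerset, t \ A ⊂ insert x t := fun A _ =>
      sdiff_subset.trans_ssubset (ssubset_insert hxt)
    set a : Fin m → ℝ := fun j => f (j.1 + 1) / (j.1 + 1)!
    have hfa : ∀ j : Fin m, ((j.1 + 1)! : ℝ) * a j = f (j + 1) :=
      fun j => mul_div_cancel₀ _ (by positivity)
    rw [partitionSum_insert f hxt, card_insert_of_notMem hxt,
      factorial_mul_profileSum_succ_eq_sum_range f hf hfa]
    calc ∑ A ∈ t.powerset, f (#A + 1) * partitionSum f (t \ A)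
        = ∑ A ∈ t.powerset, f (#A + 1) * ((#t - #A)! * profileSum a (#t - #A)) :=
          sum_congr rfl fun A hA => by
            rw [ih _ (hsub A hA), card_sdiff_of_subset (mem_powerset.1 hA)]
      _ = ∑ i ∈ range (#t + 1),
            (#t).choose i • (f (i + 1) * ((#t - i)! * profileSum a (#t - i))) :=
          sum_powerset_apply_card fun i => f (i + 1) * ((#t - i)! * profileSum a (#t - i))
      _ = _ := sum_congr rfl fun i _ => by rw [nsmul_eq_mul, mul_assoc]

end SetPartition

lemma partSum_eq_sum_isSetPartition {N : ℕ} (G : (k : ℕ) → (Fin k → Bool) → ℝ) (f : ℕ → ℝ)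
    (hGf : ∀ l, 1 ≤ l → l ≤ N → G l (fun _ => true) = f l) :
    partSum G N (fun _ => true) =
      ∑ π with IsSetPartition (univ : Finset (Fin N)) π ∧ 2 ≤ #π, ∏ B ∈ π, f #B := by
  rw [partSum, sum_filter]
  refine sum_congr rfl fun π _ => ?_
  simp only [← isSetPartition_univ_iff]
  split_ifs with hπ
  · refine prod_congr rfl fun B hB => hGf _ (card_pos.2 (hπ.1.1 B hB).1) ?_
    simpa using card_le_univ B
  · rfl

section Mfac

variable {m : ℕ}

lemma nl_castSucc (N : ℕ) (k : Fin (m + 1) → ℕ) (l : Fin m) :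
    nl N k l.castSucc = nl N (fun i => k i.castSucc) l := by
  simp [nl, sum_filter, Fin.sum_univ_castSucc, not_lt.2 (Fin.le_last _)]

lemma nl_last (N : ℕ) (k : Fin (m + 1) → ℕ) :
    nl N k (Fin.last m) = N - profileSize (fun i => k i.castSucc) := by
  simp [nl, sum_filter, Fin.sum_univ_castSucc, profileSize, Fin.castSucc_lt_last]

lemma prod_Mfac_nl (N : ℕ) (k : Fin m → ℕ) :
    ∏ l, Mfac (nl N k l) (l + 1) (k l) =
      N ! / ((N - profileSize k)! * ∏ l, ((k l)! : ℝ)) := by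
  induction m with
  | zero => simp [profileSize, (factorial_pos N).ne']
  | succ m ih =>
    simp only [Fin.prod_univ_castSucc, nl_castSucc, Fin.val_castSucc]
    rw [ih]
    simp only [nl_last, Mfac, Fin.val_last, profileSize_castSucc, ← Nat.sub_sub]
    have := factorial_ne_zero
    field_simp

lemma prod_Mfac_eq_factorial_mul_profileTerm {N : ℕ} (f : ℕ → ℝ) {k : Fin m → ℕ}
    (hk : profileSize k = N) :
    ∏ l : Fin m,
        f (l.1 + 1) ^ k l * (1 / ((l.1 + 1)! : ℝ)) ^ k l * Mfac (nl N k l) (l.1 + 1) (k l) =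
      N ! * profileTerm (fun l => f (l.1 + 1) / (l.1 + 1)!) k := by
  rw [prod_mul_distrib, prod_Mfac_nl, hk, Nat.sub_self, profileTerm, prod_div_distrib]
  simp only [← mul_pow, ← div_eq_mul_one_div, factorial_zero, Nat.cast_one, one_mul]
  ring

end Mfac

lemma sum_fin_eq_sum_profiles {m : ℕ} (N : ℕ) (F : (Fin m → ℕ) → ℝ) :
    ∑ k : Fin m → Fin (N + 1),
        (if profileSize (fun l => (k l : ℕ)) = N then F (fun l => k l) else 0) =
      ∑ k ∈ profiles m N, F k := by
  rw [← sum_filter]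
  refine (sum_map _ ⟨fun (k : Fin m → Fin (N + 1)) l => (k l : ℕ),
    Fin.val_injective.comp_left⟩ F).symm.trans (congrArg (Finset.sum · F) ?_)
  ext k
  simp only [mem_map, mem_filter, mem_univ, true_and, Function.Embedding.coeFn_mk, mem_profiles]
  constructor
  · rintro ⟨k, hk, rfl⟩
    exact hk
  · intro hk
    refine ⟨fun l => ⟨k l, ?_⟩, hk, rfl⟩
    have := mul_apply_le_profileSize k l
    rw [hk] at this
    nlinarith

theorem stmt14_general {Ω : Type*} [MeasurableSpace Ω] (μ : Measure Ω)
    {N lmax : ℕ} (hN : 1 ≤ N)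
    (E : Fin N → Set Ω)
    -- `G` is the family of correlation functions of the symmetric sequence of events:
    (G : (k : ℕ) → (Fin k → Bool) → ℝ)
    (hG : ∀ (k : ℕ), 1 ≤ k → ∀ (hk : k ≤ N) (r : Fin k → Bool),
      G k r = probFun μ E k hk r - partSum G k r)
    -- the events are correlated up to order `lmax`, with correlation coefficients `C l`:
    (C : ℕ → ℝ)
    (hC : ∀ l : ℕ, 1 ≤ l → l ≤ N → G l (fun _ => true) = C l / (N : ℝ) ^ l)
    (hCz : ∀ l : ℕ, lmax < l → C l = 0) :
    -- `p_N(N) = P_N(1,…,1)` is given by the sum over profiles `(k_1,…,k_{lmax})`: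
    probFun μ E N le_rfl (fun _ => true) =
      ∑ k : Fin lmax → Fin (N + 1),
        if (∑ l : Fin lmax, (l.1 + 1) * (k l).1) = N then
          ∏ l : Fin lmax,
            (C (l.1 + 1) / (N : ℝ) ^ (l.1 + 1)) ^ ((k l).1) *
              ((1 : ℝ) / ((l.1 + 1).factorial : ℝ)) ^ ((k l).1) *
              Mfac (nl N (fun l' => (k l').1) l) (l.1 + 1) ((k l).1)
        else 0 := by
  set f : ℕ → ℝ := fun l => C l / (N : ℝ) ^ l
  have hf : ∀ l, lmax < l → f l = 0 := fun l hl => by simp [f, hCz l hl]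
  have : Nonempty (Fin N) := ⟨⟨0, hN⟩⟩
  calc probFun μ E N le_rfl (fun _ => true)
      = G N (fun _ => true) + partSum G N (fun _ => true) := by
        linarith [hG N hN le_rfl fun _ => true]
    _ = partitionSum f (univ : Finset (Fin N)) := by
        rw [partitionSum_univ, Fintype.card_fin, partSum_eq_sum_isSetPartition G f hC,
          hC N hN le_rfl]
    _ = N ! * profileSum (fun j : Fin lmax => f (j.1 + 1) / (j.1 + 1)!) N := by
        rw [partitionSum_eq_factorial_mul_profileSum f hf, Finset.card_univ, Fintype.card_fin]
    _ = ∑ k ∈ profiles lmax N, ∏ l : Fin lmax,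
          f (l.1 + 1) ^ k l * (1 / ((l.1 + 1)! : ℝ)) ^ k l * Mfac (nl N k l) (l.1 + 1) (k l) := by
        rw [profileSum, mul_sum]
        exact sum_congr rfl fun k hk =>
          (prod_Mfac_eq_factorial_mul_profileTerm f (mem_profiles.1 hk)).symm
    _ = _ := (sum_fin_eq_sum_profiles N _).symm

theorem stmt14 {Ω : Type*} [MeasurableSpace Ω] (μ : Measure Ω) [IsProbabilityMeasure μ]
    {N lmax : ℕ} (hN : 1 ≤ N)
    (E : Fin N → Set Ω) (hE : ∀ i, MeasurableSet (E i))
    (hsym : IsSymmetricEvents μ E)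
    -- `G` is the family of correlation functions of the symmetric sequence of events:
    (G : (k : ℕ) → (Fin k → Bool) → ℝ)
    (hG : ∀ (k : ℕ), 1 ≤ k → ∀ (hk : k ≤ N) (r : Fin k → Bool),
      G k r = probFun μ E k hk r - partSum G k r)
    -- the events are correlated up to order `lmax`, with correlation coefficients `C l`:
    (C : ℕ → ℝ)
    (hC : ∀ l : ℕ, 1 ≤ l → l ≤ N → G l (fun _ => true) = C l / (N : ℝ) ^ l)
    (hCz : ∀ l : ℕ, lmax < l → C l = 0) :
    -- `p_N(N) = P_N(1,…,1)` is given by the sum over profiles `(k_1,…,k_{lmax})`: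
    probFun μ E N le_rfl (fun _ => true) =
      ∑ k : Fin lmax → Fin (N + 1),
        if (∑ l : Fin lmax, (l.1 + 1) * (k l).1) = N then
          ∏ l : Fin lmax,
            (C (l.1 + 1) / (N : ℝ) ^ (l.1 + 1)) ^ ((k l).1) *
              ((1 : ℝ) / ((l.1 + 1).factorial : ℝ)) ^ ((k l).1) *
              Mfac (nl N (fun l' => (k l').1) l) (l.1 + 1) ((k l).1)
        else 0 :=
  stmt14_general μ hN E G hG C hC hCz
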